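/- If ψ : [0,∞) × ℝ → ℝ is continuously differentiable, x : [0,T) → ℝ is differentiable with ψ(0, x(0)) ≥ 0, and there is a locally Lipschitz nondecreasing function α with α(0) = 0 such that d/dt ψ(t, x(t)) + α(ψ(t, x(t))) ≥ 0 for all t ∈ [0,T), then ψ(t, x(t)) ≥ 0 for all t ∈ [0,T). -/

import Mathlib

/-! Since α is nondecreasing with α(0) = 0, the inequality forces the derivative of
y(t) = ψ(t, x(t)) to be nonnegative wherever y < 0. If y were negative at some time,
then on the interval from the last earlier time where y ≥ 0 it would be nondecreasing,
which is absurd. -/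

open Set

theorem exists_last_nonneg_of_neg {y : ℝ → ℝ} {a b : ℝ} (hab : a ≤ b)
    (hy : ContinuousOn y (Icc a b)) (ha : 0 ≤ y a) (hb : y b < 0) :
    ∃ c ∈ Ico a b, 0 ≤ y c ∧ ∀ t ∈ Ioc c b, y t < 0 := by
  set S := Icc a b ∩ y ⁻¹' Ici 0
  have hS : IsCompact S := isCompact_Icc.of_isClosed_subset
    (hy.preimage_isClosed_of_isClosed isClosed_Icc isClosed_Ici) inter_subset_left
  obtain ⟨c, ⟨⟨hac, hcb⟩, hc⟩, hmax⟩ := hS.exists_isGreatest ⟨a, ⟨le_rfl, hab⟩, ha⟩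
  refine ⟨c, ⟨hac, lt_of_le_of_ne hcb ?_⟩, hc, fun t ⟨hct, htb⟩ => ?_⟩
  · rintro rfl
    exact hb.not_ge hc
  · by_contra! ht
    exact (hmax ⟨⟨hac.trans hct.le, htb⟩, ht⟩).not_gt hct

theorem nonneg_of_deriv_nonneg_of_neg {y : ℝ → ℝ} {a b : ℝ} (hcont : ContinuousOn y (Icc a b))
    (hdiff : DifferentiableOn ℝ y (Ioo a b)) (ha : 0 ≤ y a)
    (hderiv : ∀ t ∈ Ioo a b, y t < 0 → 0 ≤ deriv y t) : ∀ t ∈ Icc a b, 0 ≤ y t := by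
  intro t ⟨hat, htb⟩
  by_contra! ht
  obtain ⟨c, ⟨hac, hct⟩, hc, hneg⟩ :=
    exists_last_nonneg_of_neg hat (hcont.mono (Icc_subset_Icc_right htb)) ha ht
  have hsub : Icc c t ⊆ Icc a b := Icc_subset_Icc hac htb
  have hmono : MonotoneOn y (Icc c t) := by
    refine monotoneOn_of_deriv_nonneg (convex_Icc c t) (hcont.mono hsub)
      (hdiff.mono (by simpa using Ioo_subset_Ioo hac htb)) fun s hs => ?_
    rw [interior_Icc] at hs
    exact hderiv s (Ioo_subset_Ioo hac htb hs) (hneg s (Ioo_subset_Ioc_self hs))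
  have := hmono (left_mem_Icc.2 hct.le) (right_mem_Icc.2 hct.le) hct.le
  linarith

theorem barrier_comparison_forward_invariance_general
    (ψ : ℝ → ℝ → ℝ) (hψ : ContDiff ℝ 1 (fun p : ℝ × ℝ => ψ p.1 p.2))
    (x : ℝ → ℝ) (hx : Differentiable ℝ x) (T : ℝ)
    (α : ℝ → ℝ) (hmono : Monotone α) (hα0 : α 0 = 0)
    (h0 : 0 ≤ ψ 0 (x 0))
    (hineq : ∀ t ∈ Set.Ico (0 : ℝ) T,
      0 ≤ deriv (fun s => ψ s (x s)) t + α (ψ t (x t))) :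
    ∀ t ∈ Set.Ico (0 : ℝ) T, 0 ≤ ψ t (x t) := by
  have hy : Differentiable ℝ (fun s => ψ s (x s)) :=
    (hψ.differentiable one_ne_zero).comp (differentiable_id.prodMk hx)
  intro t ⟨ht0, htT⟩
  refine nonneg_of_deriv_nonneg_of_neg hy.continuous.continuousOn hy.differentiableOn h0
    (fun s ⟨hs0, hst⟩ hneg => ?_) t ⟨ht0, le_rfl⟩
  have hα : α (ψ s (x s)) ≤ 0 := hα0 ▸ hmono hneg.le
  linarith [hineq s ⟨hs0.le, hst.trans htT⟩]

/-- Comparison-lemma forward invariance: if ψ is C¹, x is differentiable,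
ψ(0,x(0)) ≥ 0, and α is locally Lipschitz, nondecreasing with α(0) = 0 such that
d/dt ψ(t,x(t)) + α(ψ(t,x(t))) ≥ 0 on [0,T), then ψ(t,x(t)) ≥ 0 on [0,T). -/
theorem barrier_comparison_forward_invariance
    (ψ : ℝ → ℝ → ℝ) (hψ : ContDiff ℝ 1 (fun p : ℝ × ℝ => ψ p.1 p.2))
    (x : ℝ → ℝ) (hx : Differentiable ℝ x) (T : ℝ) (hT : 0 < T)
    (α : ℝ → ℝ) (hα : LocallyLipschitz α) (hmono : Monotone α) (hα0 : α 0 = 0)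
    (h0 : 0 ≤ ψ 0 (x 0))
    (hineq : ∀ t ∈ Set.Ico (0 : ℝ) T,
      0 ≤ deriv (fun s => ψ s (x s)) t + α (ψ t (x t))) :
    ∀ t ∈ Set.Ico (0 : ℝ) T, 0 ≤ ψ t (x t) :=
  barrier_comparison_forward_invariance_general ψ hψ x hx T α hmono hα0 h0 hineq
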